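/- Let h₁, h₂ : [0,1] → [0,1] be twice continuously differentiable with hᵢ' > 0, hᵢ(0)=0, hᵢ(1)=1, and suppose -h₂''(p)/h₂'(p) ≥ -h₁''(p)/h₁'(p) for all p ∈ (0,1). Then for all p₀ and ε with 0 < ε ≤ min(p₀, 1-p₀) and p₀ < 1, the DT probability premia satisfy λ₂(p₀,ε) ≥ λ₁(p₀,ε), where λᵢ is the unique solution in [-ε, ε] of hᵢ(p₀ - λ) = (hᵢ(p₀-ε) + hᵢ(p₀+ε))/2. -/

import Mathlib

/-!
The ratio `h₂' / h₁'` has derivative of the sign of `h₁'' h₂' - h₁' h₂''`, so the comparison of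
the indices `-hᵢ'' / hᵢ'` makes it antitone. By Cauchy's mean value theorem, `h₂` then rises at
most as fast, relative to `h₁`, to the right of a point as to its left: at the point `p₀ - λ₁`
where `h₁` reaches the midpoint of `h₁(p₀ ∓ ε)`, `h₂` is already at least the midpoint of
`h₂(p₀ ∓ ε)`, which `h₂` reaches at `p₀ - λ₂`. Since `h₂` is increasing, `λ₁ ≤ λ₂`.
-/

open Set

theorem antitoneOn_deriv_div_deriv {f g : ℝ → ℝ} {s : Set ℝ} (hs : Convex ℝ s)
    (hf : ContDiff ℝ 2 f) (hg : ContDiff ℝ 2 g)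
    (hf' : ∀ x ∈ s, 0 < deriv f x) (hg' : ∀ x ∈ s, 0 < deriv g x)
    (hidx : ∀ x ∈ interior s,
      -deriv (deriv f) x / deriv f x ≤ -deriv (deriv g) x / deriv g x) :
    AntitoneOn (fun x => deriv g x / deriv f x) s := by
  have hf'' : Differentiable ℝ (deriv f) := (hf.deriv' (n := 1)).differentiable one_ne_zero
  have hg'' : Differentiable ℝ (deriv g) := (hg.deriv' (n := 1)).differentiable one_ne_zero
  refine antitoneOn_of_deriv_nonpos hs
    (hg''.continuous.continuousOn.div hf''.continuous.continuousOn fun x hx => (hf' x hx).ne')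
    (fun x hx => ((hg'' x).div (hf'' x) (hf' x (interior_subset hx)).ne').differentiableWithinAt)
    fun x hx => ?_
  have hfx := hf' x (interior_subset hx)
  have hgx := hg' x (interior_subset hx)
  have hcross := hidx x hx
  rw [div_le_div_iff₀ hfx hgx] at hcross
  rw [deriv_fun_div (hg'' x) (hf'' x) hfx.ne']
  exact div_nonpos_of_nonpos_of_nonneg (by nlinarith) (sq_nonneg _)

theorem exists_mem_Ioo_sub_eq_sub_mul_deriv_div {f g : ℝ → ℝ} {u v : ℝ} (huv : u < v)
    (hf : Differentiable ℝ f) (hg : Differentiable ℝ g)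
    (hf' : ∀ x ∈ Ioo u v, deriv f x ≠ 0) :
    ∃ ξ ∈ Ioo u v, g v - g u = (f v - f u) * (deriv g ξ / deriv f ξ) := by
  obtain ⟨ξ, hξ, hcauchy⟩ := exists_ratio_deriv_eq_ratio_slope g huv
    hg.continuous.continuousOn hg.differentiableOn f hf.continuous.continuousOn hf.differentiableOn
  refine ⟨ξ, hξ, ?_⟩
  rw [mul_div_assoc', eq_div_iff (hf' ξ hξ)]
  linarith

theorem midpoint_le_of_antitoneOn_deriv_div_deriv {f g : ℝ → ℝ} {s : Set ℝ} {a b c : ℝ}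
    (hs : Convex ℝ s) (hf : Differentiable ℝ f) (hg : Differentiable ℝ g)
    (hf' : ∀ x ∈ s, 0 < deriv f x) (hr : AntitoneOn (fun x => deriv g x / deriv f x) s)
    (ha : a ∈ s) (hc : c ∈ s) (hb : b ∈ Icc a c) (hfb : f b = (f a + f c) / 2) :
    (g a + g c) / 2 ≤ g b := by
  obtain rfl | hac := (hb.1.trans hb.2).eq_or_lt
  · obtain rfl := le_antisymm hb.2 hb.1
    linarith
  have hsub : Icc a c ⊆ s := hs.ordConnected.out ha hc
  have hmono : StrictMonoOn f s :=
    strictMonoOn_of_deriv_pos hs hf.continuous.continuousOn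
      fun x hx => hf' x (interior_subset hx)
  have hfac : f a < f c := hmono ha hc hac
  have hab : a < b := (hmono.lt_iff_lt ha (hsub hb)).mp (by linarith)
  have hbc : b < c := (hmono.lt_iff_lt (hsub hb) hc).mp (by linarith)
  have hf'_ne {u v : ℝ} (hu : a ≤ u) (hv : v ≤ c) : ∀ x ∈ Ioo u v, deriv f x ≠ 0 :=
    fun x hx => (hf' x (hsub ⟨hu.trans hx.1.le, hx.2.le.trans hv⟩)).ne'
  obtain ⟨ξ₁, hξ₁, hleft⟩ :=
    exists_mem_Ioo_sub_eq_sub_mul_deriv_div hab hf hg (hf'_ne le_rfl hbc.le)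
  obtain ⟨ξ₂, hξ₂, hright⟩ :=
    exists_mem_Ioo_sub_eq_sub_mul_deriv_div hbc hf hg (hf'_ne hab.le le_rfl)
  have hratio : deriv g ξ₂ / deriv f ξ₂ ≤ deriv g ξ₁ / deriv f ξ₁ :=
    hr (hsub ⟨hξ₁.1.le, hξ₁.2.le.trans hbc.le⟩) (hsub ⟨hab.le.trans hξ₂.1.le, hξ₂.2.le⟩)
      (hξ₁.2.trans hξ₂.1).le
  have hsteps : f c - f b = f b - f a := by rw [hfb]; ring
  have hincrements : g c - g b ≤ g b - g a := by
    rw [hleft, hright, hsteps]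
    exact mul_le_mul_of_nonneg_left hratio (by linarith)
  linarith

theorem dt_comparative_probability_premium_general
    (h₁ h₂ : ℝ → ℝ)
    (hC1 : ContDiff ℝ 2 h₁) (hC2 : ContDiff ℝ 2 h₂)
    (hd1 : ∀ p ∈ Icc (0:ℝ) 1, 0 < deriv h₁ p)
    (hd2 : ∀ p ∈ Icc (0:ℝ) 1, 0 < deriv h₂ p)
    (hidx : ∀ p ∈ Ioo (0:ℝ) 1,
      -(deriv (deriv h₂) p) / deriv h₂ p ≥ -(deriv (deriv h₁) p) / deriv h₁ p) :
    ∀ p₀ ε lam₁ lam₂ : ℝ, 0 < ε → ε ≤ min p₀ (1 - p₀) → p₀ < 1 →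
      lam₁ ∈ Icc (-ε) ε → lam₂ ∈ Icc (-ε) ε →
      h₁ (p₀ - lam₁) = (h₁ (p₀ - ε) + h₁ (p₀ + ε)) / 2 →
      h₂ (p₀ - lam₂) = (h₂ (p₀ - ε) + h₂ (p₀ + ε)) / 2 →
      lam₁ ≤ lam₂ := by
  intro p₀ ε lam₁ lam₂ hε hεmin _ hlam₁ hlam₂ hmid₁ hmid₂
  have hεp₀ := hεmin.trans (min_le_left _ _)
  have hεp₀' := hεmin.trans (min_le_right _ _)
  have hunit {x : ℝ} (hx : x ∈ Icc (p₀ - ε) (p₀ + ε)) : x ∈ Icc (0:ℝ) 1 :=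
    ⟨by linarith [hx.1], by linarith [hx.2]⟩
  have hpremium {lam : ℝ} (hlam : lam ∈ Icc (-ε) ε) : p₀ - lam ∈ Icc (p₀ - ε) (p₀ + ε) :=
    ⟨by linarith [hlam.2], by linarith [hlam.1]⟩
  have hratio : AntitoneOn (fun x => deriv h₂ x / deriv h₁ x) (Icc 0 1) :=
    antitoneOn_deriv_div_deriv (convex_Icc 0 1) hC1 hC2 hd1 hd2 (by rwa [interior_Icc])
  have hle : h₂ (p₀ - lam₂) ≤ h₂ (p₀ - lam₁) :=
    hmid₂ ▸ midpoint_le_of_antitoneOn_deriv_div_deriv (convex_Icc 0 1)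
      (hC1.differentiable two_ne_zero) (hC2.differentiable two_ne_zero) hd1 hratio
      (hunit (left_mem_Icc.mpr (by linarith))) (hunit (right_mem_Icc.mpr (by linarith)))
      (hpremium hlam₁) hmid₁
  have hmono₂ : StrictMonoOn h₂ (Icc 0 1) :=
    strictMonoOn_of_deriv_pos (convex_Icc 0 1) hC2.continuous.continuousOn
      fun x hx => hd2 x (interior_subset hx)
  linarith [(hmono₂.le_iff_le (hunit (hpremium hlam₂)) (hunit (hpremium hlam₁))).mp hle]

/-- Global comparative risk aversion for the DT probability premium. -/
theorem dt_comparative_probability_premium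
    (h₁ h₂ : ℝ → ℝ)
    (hC1 : ContDiff ℝ 2 h₁) (hC2 : ContDiff ℝ 2 h₂)
    (hmap1 : MapsTo h₁ (Icc 0 1) (Icc 0 1)) (hmap2 : MapsTo h₂ (Icc 0 1) (Icc 0 1))
    (hd1 : ∀ p ∈ Icc (0:ℝ) 1, 0 < deriv h₁ p)
    (hd2 : ∀ p ∈ Icc (0:ℝ) 1, 0 < deriv h₂ p)
    (h10 : h₁ 0 = 0) (h11 : h₁ 1 = 1) (h20 : h₂ 0 = 0) (h21 : h₂ 1 = 1)
    (hidx : ∀ p ∈ Ioo (0:ℝ) 1,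
      -(deriv (deriv h₂) p) / deriv h₂ p ≥ -(deriv (deriv h₁) p) / deriv h₁ p) :
    ∀ p₀ ε lam₁ lam₂ : ℝ, 0 < ε → ε ≤ min p₀ (1 - p₀) → p₀ < 1 →
      lam₁ ∈ Icc (-ε) ε → lam₂ ∈ Icc (-ε) ε →
      h₁ (p₀ - lam₁) = (h₁ (p₀ - ε) + h₁ (p₀ + ε)) / 2 →
      h₂ (p₀ - lam₂) = (h₂ (p₀ - ε) + h₂ (p₀ + ε)) / 2 →
      lam₁ ≤ lam₂ :=
  dt_comparative_probability_premium_general h₁ h₂ hC1 hC2 hd1 hd2 hidx
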